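/- Real λ with λ² − (m²+k²) = E > 0 is an eigenvalue of the transverse Dirac operator T(k,m) if and only if m·sin(2√E) + √E·cos(2√E) = 0. In particular the spectrum of T(k,m) is symmetric with respect to zero. -/

import Mathlib

open Real MeasureTheory

noncomputable section

abbrev E2 : Type := EuclideanSpace ℂ (Fin 2)

def muI : Measure ℝ := volume.restrict (Set.Ioo (-1) 1)

/-- `f ∈ H¹((-1,1),ℂ²)` with weak derivative `g` and the infinite-mass boundary
conditions `u₂(±1) = ∓u₁(±1)`. -/
def IsH1BC (f g : ℝ → E2) : Prop :=
  MemLp g 2 muI ∧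
  (∀ t ∈ Set.Icc (-1 : ℝ) 1, f t = f (-1) + ∫ s in (-1 : ℝ)..t, g s) ∧
  f 1 1 = - f 1 0 ∧ f (-1) 1 = f (-1) 0

/-- `lam` is an eigenvalue of the transverse Dirac operator
`T(k,m)u = -iσ₂u' + kσ₁u + mσ₃u` with infinite-mass boundary conditions, i.e.
there is a nonzero `u = f ∈ H¹` (with derivative `g`) satisfying the boundary
conditions and the eigenvalue equations. -/
def IsEigenvalue (k m lam : ℝ) : Prop :=
  ∃ f g : ℝ → E2, IsH1BC f g ∧ (∃ t ∈ Set.Icc (-1 : ℝ) 1, f t ≠ 0) ∧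
    (∀ t ∈ Set.Icc (-1 : ℝ) 1,
      (m : ℂ) * f t 0 + (k : ℂ) * f t 1 - g t 1 = (lam : ℂ) * f t 0) ∧
    (∀ t ∈ Set.Icc (-1 : ℝ) 1,
      (k : ℂ) * f t 0 + g t 0 - (m : ℂ) * f t 1 = (lam : ℂ) * f t 1)

/-!
An eigenfunction `u` solves the first-order system `u' = A u` with
`A = [[-k, λ + m], [m - λ, k]]`, and `A² = -(λ² - m² - k²) = -E`. Hence
`u t = cos (√E (t + 1)) u(-1) + sin (√E (t + 1)) / √E • A u(-1)`; the boundary condition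
at `-1` forces `u(-1) ∈ ℂ (1, 1)`, and the boundary condition at `1` then reads
`m sin (2√E) + √E cos (2√E) = 0`. This condition sees `λ` only through `E`.
-/

open Set

section HarmonicFlow

variable {V : Type*} [NormedAddCommGroup V] [NormedSpace ℝ V] {A : V →L[ℝ] V} {ω : ℝ}

-- `harmonicFlow A ω t = exp (t • A)` as soon as `A ∘ A = -ω²`.
def harmonicFlow (A : V →L[ℝ] V) (ω t : ℝ) (y : V) : V :=
  cos (ω * t) • y + (sin (ω * t) / ω) • A y

@[simp] lemma harmonicFlow_zero (y : V) : harmonicFlow A ω 0 y = y := by simp [harmonicFlow]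

@[simp] lemma harmonicFlow_apply_zero (t : ℝ) : harmonicFlow A ω t 0 = 0 := by
  simp [harmonicFlow]

lemma hasDerivAt_harmonicFlow (hω : ω ≠ 0) (hA : ∀ y, A (A y) = -ω ^ 2 • y) (y : V)
    (t : ℝ) :
    HasDerivAt (fun t => harmonicFlow A ω t y) (A (harmonicFlow A ω t y)) t := by
  have hc := ((hasDerivAt_id t).const_mul ω).cos
  have hs := ((hasDerivAt_id t).const_mul ω).sin
  refine ((hc.smul_const y).add ((hs.div_const ω).smul_const (A y))).congr_deriv ?_
  unfold harmonicFlow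
  rw [map_add, map_smul, map_smul, hA, smul_smul]
  simp only [id, mul_one]
  rw [add_comm]
  congr 2 <;> field_simp

lemma eqOn_harmonicFlow_of_hasDerivWithinAt (hω : ω ≠ 0) (hA : ∀ y, A (A y) = -ω ^ 2 • y)
    {f : ℝ → V} {a b : ℝ} (hf : ∀ t ∈ Icc a b, HasDerivWithinAt f (A (f t)) (Icc a b) t) :
    EqOn f (fun t => harmonicFlow A ω (t - a) (f a)) (Icc a b) := by
  refine ODE_solution_unique_of_mem_Icc_right (v := fun _ => A) (s := fun _ => univ)
    (fun _ _ => A.lipschitz.lipschitzOnWith) (fun t ht => (hf t ht).continuousWithinAt)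
    (fun t ht => (hf t (Ico_subset_Icc_self ht)).mono_of_mem_nhdsWithin
      (Icc_mem_nhdsGE_of_mem ht)) (fun _ _ => mem_univ _) ?_ ?_ (fun _ _ => mem_univ _)
    (by simp)
  all_goals
    intro t _
    have := (hasDerivAt_harmonicFlow hω hA (f a) (t - a)).comp_sub_const t a
  · exact this.continuousAt.continuousWithinAt
  · exact this.hasDerivWithinAt

end HarmonicFlow

section Primitive

variable {E : Type*} [NormedAddCommGroup E] [NormedSpace ℝ E] {f g : ℝ → E} {a b : ℝ}

lemma continuousOn_of_eq_primitive (hg : IntegrableOn g (Icc a b))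
    (hf : ∀ t ∈ Icc a b, f t = f a + ∫ s in a..t, g s) : ContinuousOn f (Icc a b) := by
  rcases le_or_gt a b with hab | hba
  · rw [← uIcc_of_le hab] at hg ⊢
    exact (continuousOn_const.add (intervalIntegral.continuousOn_primitive_interval hg)).congr
      (by rwa [uIcc_of_le hab])
  · rw [Icc_eq_empty hba.not_ge]
    exact continuousOn_empty f

lemma hasDerivWithinAt_of_eq_primitive [CompleteSpace E] (hg : ContinuousOn g (Icc a b))
    (hf : ∀ t ∈ Icc a b, f t = f a + ∫ s in a..t, g s) :
    ∀ t ∈ Icc a b, HasDerivWithinAt f (g t) (Icc a b) t := by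
  intro t ht
  have : Fact (t ∈ Icc a b) := ⟨ht⟩
  have hsub : uIcc a t ⊆ Icc a b := by
    rw [uIcc_of_le ht.1]; exact Icc_subset_Icc_right ht.2
  have hprim := intervalIntegral.integral_hasDerivWithinAt_right (s := Icc a b)
    (hg.mono hsub).intervalIntegrable
    (hg.stronglyMeasurableAtFilter_nhdsWithin measurableSet_Icc t) (hg t ht)
  exact (hprim.const_add (f a)).congr_of_mem hf ht

end Primitive

-- The eigenvalue equations `T(k,m) u = λ u` solved for `u'`.
def diracField (k m lam : ℝ) : E2 →L[ℝ] E2 :=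
  (Matrix.toEuclideanCLM (𝕜 := ℂ) !![-(k : ℂ), lam + m; m - lam, k]).restrictScalars ℝ

section Dirac

variable {k m lam : ℝ}

@[simp] lemma diracField_apply_zero (y : E2) :
    diracField k m lam y 0 = -k * y 0 + (lam + m) * y 1 := by
  simp [diracField, Matrix.mulVec, dotProduct, Fin.sum_univ_two]

@[simp] lemma diracField_apply_one (y : E2) :
    diracField k m lam y 1 = (m - lam) * y 0 + k * y 1 := by
  simp [diracField, Matrix.mulVec, dotProduct, Fin.sum_univ_two]

lemma diracField_diracField (y : E2) :
    diracField k m lam (diracField k m lam y) = -(lam ^ 2 - (m ^ 2 + k ^ 2)) • y := by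
  ext i
  fin_cases i <;> simp <;> ring

lemma eigenvalue_equations_iff {y z : E2} :
    ((m : ℂ) * y 0 + k * y 1 - z 1 = lam * y 0 ∧
      (k : ℂ) * y 0 + z 0 - m * y 1 = lam * y 1) ↔
      z = diracField k m lam y := by
  constructor
  · rintro ⟨h1, h2⟩
    ext i
    fin_cases i
    · simp only [Fin.zero_eta, diracField_apply_zero]; linear_combination h2
    · simp only [Fin.mk_one, diracField_apply_one]; linear_combination -h1
  · rintro rfl
    simp only [diracField_apply_zero, diracField_apply_one]
    constructor <;> ring

instance : IsFiniteMeasure muI := ⟨by simp [muI]⟩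

lemma memLp_muI_of_continuous {g : ℝ → E2} (hg : Continuous g) : MemLp g 2 muI := by
  obtain ⟨C, hC⟩ := isCompact_Icc.exists_bound_of_continuousOn (s := Icc (-1 : ℝ) 1)
    hg.continuousOn
  refine (memLp_top_of_bound hg.aestronglyMeasurable C ?_).mono_exponent le_top
  exact (ae_restrict_mem measurableSet_Ioo).mono fun x hx => hC x (Ioo_subset_Icc_self hx)

lemma integrableOn_Icc_of_memLp_muI {g : ℝ → E2} (hg : MemLp g 2 muI) :
    IntegrableOn g (Icc (-1) 1) :=
  (integrableOn_Icc_iff_integrableOn_Ioo).2 ((hg.mono_exponent one_le_two).integrable le_rfl)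

lemma IsEigenvalue.exists_harmonicFlow {ω : ℝ} (hω : ω ≠ 0)
    (hω2 : ω ^ 2 = lam ^ 2 - (m ^ 2 + k ^ 2)) (h : IsEigenvalue k m lam) :
    ∃ y : E2, y ≠ 0 ∧ y 1 = y 0 ∧
      harmonicFlow (diracField k m lam) ω 2 y 1 =
        -harmonicFlow (diracField k m lam) ω 2 y 0 := by
  obtain ⟨f, g, ⟨hg, hfg, hbc_right, hbc_left⟩, ⟨t₀, ht₀, hft₀⟩, heq₁, heq₂⟩ := h
  set A := diracField k m lam
  have hA : ∀ y, A (A y) = -ω ^ 2 • y := by simp [A, diracField_diracField, hω2]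
  have hgA : ∀ t ∈ Icc (-1 : ℝ) 1, g t = A (f t) := fun t ht =>
    eigenvalue_equations_iff.1 ⟨heq₁ t ht, heq₂ t ht⟩
  have hfc : ContinuousOn f (Icc (-1) 1) :=
    continuousOn_of_eq_primitive (integrableOn_Icc_of_memLp_muI hg) hfg
  have hgc : ContinuousOn g (Icc (-1) 1) := (A.continuous.comp_continuousOn hfc).congr hgA
  have hf_eq := eqOn_harmonicFlow_of_hasDerivWithinAt hω hA fun t ht => by
    rw [← hgA t ht]; exact hasDerivWithinAt_of_eq_primitive hgc hfg t ht
  refine ⟨f (-1), fun h0 => hft₀ ?_, hbc_left, ?_⟩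
  · simpa [h0] using hf_eq ht₀
  · have hf₁ : f 1 = harmonicFlow A ω 2 (f (-1)) :=
      (hf_eq (right_mem_Icc.2 (by norm_num))).trans (by norm_num)
    rwa [← hf₁]

lemma isEigenvalue_of_harmonicFlow {ω : ℝ} (hω : ω ≠ 0)
    (hω2 : ω ^ 2 = lam ^ 2 - (m ^ 2 + k ^ 2)) {y : E2} (hy : y ≠ 0) (hy_left : y 1 = y 0)
    (hy_right :
      harmonicFlow (diracField k m lam) ω 2 y 1 = -harmonicFlow (diracField k m lam) ω 2 y 0) :
    IsEigenvalue k m lam := by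
  set A := diracField k m lam
  have hA : ∀ y, A (A y) = -ω ^ 2 • y := by simp [A, diracField_diracField, hω2]
  set f : ℝ → E2 := fun t => harmonicFlow A ω (t + 1) y
  have hf : ∀ t, HasDerivAt f (A (f t)) t := fun t =>
    (hasDerivAt_harmonicFlow hω hA y (t + 1)).comp_add_const t 1
  have hgc : Continuous fun t => A (f t) :=
    A.continuous.comp (continuous_iff_continuousAt.2 fun t => (hf t).continuousAt)
  refine ⟨f, fun t => A (f t), ⟨memLp_muI_of_continuous hgc, fun t _ => ?_, ?_, ?_⟩,
    ⟨-1, by norm_num, by simpa [f] using hy⟩, fun t _ => (eigenvalue_equations_iff.2 rfl).1,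
    fun t _ => (eigenvalue_equations_iff.2 rfl).2⟩
  · rw [intervalIntegral.integral_eq_sub_of_hasDerivAt (fun x _ => hf x)
      (hgc.intervalIntegrable _ _)]
    abel
  · simpa [f, one_add_one_eq_two] using hy_right
  · simpa [f] using hy_left

lemma exists_harmonicFlow_diracField_iff {ω : ℝ} (hω : ω ≠ 0) :
    (∃ y : E2, y ≠ 0 ∧ y 1 = y 0 ∧
      harmonicFlow (diracField k m lam) ω 2 y 1 =
        -harmonicFlow (diracField k m lam) ω 2 y 0) ↔
      m * sin (2 * ω) + ω * cos (2 * ω) = 0 := by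
  have key : ∀ y : E2, y 1 = y 0 →
      harmonicFlow (diracField k m lam) ω 2 y 0 + harmonicFlow (diracField k m lam) ω 2 y 1 =
        2 * y 0 / ω * ((m * sin (2 * ω) + ω * cos (2 * ω) : ℝ) : ℂ) := by
    intro y hy
    have hωc : (ω : ℂ) ≠ 0 := by exact_mod_cast hω
    simp only [harmonicFlow, PiLp.add_apply, PiLp.smul_apply, Complex.real_smul,
      diracField_apply_zero, diracField_apply_one, hy]
    push_cast
    field_simp
    ring
  constructor
  · rintro ⟨y, hy, hy_left, hy_right⟩
    have hy0 : y 0 ≠ 0 := fun h0 => hy (by ext i; fin_cases i <;> simp [h0, hy_left])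
    have hsum := key y hy_left
    rw [hy_right, add_neg_cancel] at hsum
    exact Complex.ofReal_eq_zero.1 ((mul_eq_zero.1 hsum.symm).resolve_left (by simp [hy0, hω]))
  · intro h
    refine ⟨!₂[1, 1], fun h0 => by simpa using congrArg (· 0) h0, rfl, ?_⟩
    have hsum := key !₂[1, 1] rfl
    rw [h, Complex.ofReal_zero, mul_zero] at hsum
    linear_combination hsum

lemma isEigenvalue_iff_of_sq_eq {ω : ℝ} (hω : ω ≠ 0)
    (hω2 : ω ^ 2 = lam ^ 2 - (m ^ 2 + k ^ 2)) :
    IsEigenvalue k m lam ↔ m * sin (2 * ω) + ω * cos (2 * ω) = 0 := by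
  rw [← exists_harmonicFlow_diracField_iff hω]
  exact ⟨IsEigenvalue.exists_harmonicFlow hω hω2,
    fun ⟨_, hy, hy_left, hy_right⟩ =>
      isEigenvalue_of_harmonicFlow hω hω2 hy hy_left hy_right⟩

end Dirac

theorem eigenvalue_characterization_general (k m lam E : ℝ)
    (hE : E = lam^2 - (m^2 + k^2)) (hEpos : 0 < E) :
    (IsEigenvalue k m lam ↔
        m * Real.sin (2 * Real.sqrt E) + Real.sqrt E * Real.cos (2 * Real.sqrt E) = 0) ∧
      (IsEigenvalue k m lam ↔ IsEigenvalue k m (-lam)) := by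
  have hω : √E ≠ 0 := (sqrt_pos.2 hEpos).ne'
  have hω2 : √E ^ 2 = lam ^ 2 - (m ^ 2 + k ^ 2) := by rw [sq_sqrt hEpos.le, hE]
  have hω2_neg : √E ^ 2 = (-lam) ^ 2 - (m ^ 2 + k ^ 2) := by rw [hω2, neg_sq]
  exact ⟨isEigenvalue_iff_of_sq_eq hω hω2,
    (isEigenvalue_iff_of_sq_eq hω hω2).trans (isEigenvalue_iff_of_sq_eq hω hω2_neg).symm⟩

/-- A real `λ` with `E := λ² − (m²+k²) > 0` is an eigenvalue of `T(k,m)` if and only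
if `m·sin(2√E) + √E·cos(2√E) = 0`.  In particular, the spectrum of `T(k,m)` is
symmetric with respect to zero. -/
theorem eigenvalue_characterization (k m lam E : ℝ) (hm : 0 ≤ m)
    (hE : E = lam^2 - (m^2 + k^2)) (hEpos : 0 < E) :
    (IsEigenvalue k m lam ↔
        m * Real.sin (2 * Real.sqrt E) + Real.sqrt E * Real.cos (2 * Real.sqrt E) = 0) ∧
      (IsEigenvalue k m lam ↔ IsEigenvalue k m (-lam)) :=
  eigenvalue_characterization_general k m lam E hE hEpos

end
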